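/- A Toeplitz matrix with smooth symbol is rapidly decreasing only if the symbol vanishes: if f : ℝ → ℂ is a smooth function with f(t+1) = f(t) and the matrix (i,j) ↦ f̂(i−j) (i, j ∈ ℕ) is rapidly decreasing, then f̂(n) = 0 for all n ∈ ℤ, and hence f = 0. Consequently, the decomposition of an element of the smooth Toeplitz algebra as (rapidly decreasing matrix) + (Toeplitz matrix of a smooth symbol) is unique. -/

import Mathlib

/-- The `n`-th Fourier coefficient `f̂(n) = ∫₀¹ f(t)·exp(−2πint) dt` of a
1-periodic function. -/
noncomputable def fc (f : ℝ → ℂ) (n : ℤ) : ℂ :=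
  ∫ t in (0:ℝ)..1, f t * Complex.exp (-(2 * (Real.pi : ℂ) * Complex.I * (n : ℂ) * (t : ℂ)))

/-- A matrix `a : ℕ × ℕ → ℂ` is rapidly decreasing (a smooth compact operator) if
`sup_{i,j} (1+i)^m (1+j)^n |a(i,j)| < ∞` for all `m, n`. -/
def RapidDecay (a : ℕ → ℕ → ℂ) : Prop :=
  ∀ m n : ℕ, ∃ C : ℝ, ∀ i j : ℕ,
    (1 + (i : ℝ)) ^ m * (1 + (j : ℝ)) ^ n * ‖a i j‖ ≤ C

lemma fc_eq (f : ℝ → ℂ) (hp : Function.Periodic f 1) (n : ℤ) :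
    haveI : Fact ((0:ℝ) < 1) := ⟨one_pos⟩
    fc f n = fourierCoeff (T := 1) hp.lift n := by
  haveI : Fact ((0:ℝ) < 1) := ⟨one_pos⟩
  rw [fourierCoeff_eq_intervalIntegral (T := 1) hp.lift n 0]
  rw [zero_add, one_div_one, one_smul, fc]
  congr 1
  ext t
  rw [fourier_coe_apply, Function.Periodic.lift_coe, smul_eq_mul]
  push_cast
  ring_nf

lemma fc_zero_of_rapid (f : ℝ → ℂ) (h : RapidDecay (fun i j => fc f ((i : ℤ) - j))) :
    ∀ n : ℤ, fc f n = 0 := by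
  intro n
  obtain ⟨C, hC⟩ := h 1 0
  have key : ∀ k : ℕ, (1 + (k : ℝ)) * ‖fc f n‖ ≤ C := by
    intro k
    set j : ℕ := n.natAbs + k
    set i : ℕ := (n + n.natAbs).toNat + k
    have hij : (i : ℤ) - j = n := by
      have h1 : (0:ℤ) ≤ n + n.natAbs := by omega
      simp only [i, j]
      omega
    have h2 := hC i j
    simp only [hij, pow_one, pow_zero, mul_one] at h2
    have h3 : (1 + (k : ℝ)) ≤ 1 + (i : ℝ) := by
      have : (k : ℝ) ≤ (i : ℝ) := by exact_mod_cast Nat.le_add_left k _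
      linarith
    calc (1 + (k : ℝ)) * ‖fc f n‖
        ≤ (1 + (i : ℝ)) * ‖fc f n‖ := by
          exact mul_le_mul_of_nonneg_right h3 (norm_nonneg _)
      _ ≤ C := h2
  by_contra h0
  have habs : 0 < ‖fc f n‖ := norm_pos_iff.mpr h0
  obtain ⟨k, hk⟩ := exists_nat_gt (C / ‖fc f n‖)
  have : C < (1 + (k : ℝ)) * ‖fc f n‖ := by
    have := (div_lt_iff₀ habs).mp hk
    nlinarith
  linarith [key k]

lemma f_zero_of_fc_zero (f : ℝ → ℂ) (hf : Continuous f) (hp : Function.Periodic f 1)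
    (h : ∀ n : ℤ, fc f n = 0) : f = 0 := by
  haveI : Fact ((0:ℝ) < 1) := ⟨one_pos⟩
  set F : C(AddCircle 1, ℂ) := ⟨hp.lift, hf.quotient_liftOn' (by
    intro a b hab
    rw [QuotientAddGroup.leftRel_apply] at hab
    obtain ⟨z, hz⟩ := hab
    have hb : b = a + z • (1:ℝ) := by
      have : z • (1:ℝ) = -a + b := hz
      linarith [this]
    rw [hb]
    exact ((hp.zsmul z) a).symm)⟩ with hFdef
  have hcoeff : ∀ n : ℤ, fourierCoeff (T := (1:ℝ)) ⇑F  n = 0 := by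
    intro n
    have := fc_eq f hp n
    rw [h n] at this
    exact this.symm
  have hsummable : Summable (fourierCoeff (T := (1:ℝ)) ⇑F ) := by
    have : (fourierCoeff (T := (1:ℝ)) ⇑F) = fun _ => (0:ℂ) := funext hcoeff
    rw [this]; exact summable_zero
  have hsum := hasSum_fourier_series_of_summable (f := F) hsummable
  simp only [hcoeff, zero_smul] at hsum
  have hF : F = 0 := by
    have := hsum.unique hasSum_zero
    exact this
  funext t
  have h2 : F (((t : ℝ) : AddCircle (1:ℝ))) = f t := Function.Periodic.lift_coe hp t
  rw [hF] at h2
  exact h2.symm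

lemma fc_sub (f g : ℝ → ℂ) (hf : Continuous f) (hg : Continuous g) (n : ℤ) :
    fc (f - g) n = fc f n - fc g n := by
  unfold fc
  rw [← intervalIntegral.integral_sub]
  · congr 1; ext t; simp [sub_mul]
  · exact (hf.mul (by continuity)).intervalIntegrable 0 1
  · exact (hg.mul (by continuity)).intervalIntegrable 0 1

lemma rapid_sub (a b : ℕ → ℕ → ℂ) (ha : RapidDecay a) (hb : RapidDecay b) :
    RapidDecay (fun i j => a i j - b i j) := by
  intro m n
  obtain ⟨C₁, h₁⟩ := ha m n
  obtain ⟨C₂, h₂⟩ := hb m n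
  refine ⟨C₁ + C₂, fun i j => ?_⟩
  have hP : (0:ℝ) ≤ (1 + (i:ℝ)) ^ m * (1 + (j:ℝ)) ^ n := by positivity
  have htri : ‖a i j - b i j‖ ≤ ‖a i j‖ + ‖b i j‖ := by
    exact norm_sub_le (a i j) (b i j)
  calc (1 + (i:ℝ)) ^ m * (1 + (j:ℝ)) ^ n * ‖a i j - b i j‖
      ≤ (1 + (i:ℝ)) ^ m * (1 + (j:ℝ)) ^ n * (‖a i j‖ + ‖b i j‖) :=
        mul_le_mul_of_nonneg_left htri hP
    _ = (1 + (i:ℝ)) ^ m * (1 + (j:ℝ)) ^ n * ‖a i j‖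
        + (1 + (i:ℝ)) ^ m * (1 + (j:ℝ)) ^ n * ‖b i j‖ := by ring
    _ ≤ C₁ + C₂ := add_le_add (h₁ i j) (h₂ i j)

/-- A Toeplitz matrix with smooth symbol is rapidly decreasing only if the symbol
vanishes; consequently the decomposition of an element of the smooth Toeplitz algebra
as (rapidly decreasing matrix) + (Toeplitz matrix of a smooth symbol) is unique. -/
theorem stmt14 :
    (∀ f : ℝ → ℂ, ContDiff ℝ (⊤ : ℕ∞) f → Function.Periodic f 1 →
      RapidDecay (fun i j => fc f ((i : ℤ) - j)) → (∀ n : ℤ, fc f n = 0) ∧ f = 0)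
    ∧ (∀ (a b : ℕ → ℕ → ℂ) (f g : ℝ → ℂ), RapidDecay a → RapidDecay b →
        ContDiff ℝ (⊤ : ℕ∞) f → Function.Periodic f 1 →
        ContDiff ℝ (⊤ : ℕ∞) g → Function.Periodic g 1 →
        (∀ i j : ℕ, a i j + fc f ((i : ℤ) - j) = b i j + fc g ((i : ℤ) - j)) →
        a = b ∧ f = g) := by
  constructor
  · intro f hf hp hr
    have h1 : ∀ n : ℤ, fc f n = 0 := fc_zero_of_rapid f hr
    exact ⟨h1, f_zero_of_fc_zero f hf.continuous hp h1⟩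
  · intro a b f g ha hb hf hpf hg hpg heq
    have hsub : ∀ i j : ℕ, fc (f - g) ((i:ℤ) - j) = b i j - a i j := by
      intro i j
      rw [fc_sub f g hf.continuous hg.continuous]
      have := heq i j
      linear_combination this
    have hr : RapidDecay (fun i j => fc (f - g) ((i:ℤ) - j)) := by
      have := rapid_sub b a hb ha
      intro m n
      obtain ⟨C, hC⟩ := this m n
      exact ⟨C, fun i j => by simp only [hsub i j]; exact hC i j⟩
    have hmain := fc_zero_of_rapid (f - g) hr
    have hfg : f - g = 0 := f_zero_of_fc_zero (f - g) (hf.continuous.sub hg.continuous)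
      (hpf.sub hpg) hmain
    refine ⟨?_, sub_eq_zero.mp hfg⟩
    funext i j
    have h0 := hsub i j
    rw [hmain ((i:ℤ) - j)] at h0
    exact (sub_eq_zero.mp h0.symm).symm
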